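/- Let d ≥ 5 and k an integer with 1 ≤ k and 2k + 1 < d; set f = x^d + x^{d−k} y^{k} + y^{d−1} z ∈ ℂ[x,y,z]. Then −k·y^{d−k−1}·f_x + d·x^{k−1}·y^{d−2k}·f_y + (k(d−k)·x^{d−k−1} − d(d−1)·x^{k−1}·y^{d−2k−1}·z)·f_z = 0. -/

import Mathlib

open MvPolynomial

variable {R : Type*} [CommSemiring R]

noncomputable def trinomial (d k : ℕ) : MvPolynomial (Fin 3) R :=
  X 0 ^ d + X 0 ^ (d - k) * X 1 ^ k + X 1 ^ (d - 1) * X 2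

lemma pderiv_zero_trinomial (d k : ℕ) :
    pderiv 0 (trinomial d k : MvPolynomial (Fin 3) R) =
      d • X 0 ^ (d - 1) + (d - k) • (X 0 ^ (d - k - 1) * X 1 ^ k) := by
  simp [trinomial, nsmul_eq_mul, mul_comm, mul_assoc]

lemma pderiv_one_trinomial (d k : ℕ) :
    pderiv 1 (trinomial d k : MvPolynomial (Fin 3) R) =
      k • (X 0 ^ (d - k) * X 1 ^ (k - 1)) + (d - 1) • (X 1 ^ (d - 2) * X 2) := by
  simp [trinomial, nsmul_eq_mul, Nat.sub_sub, mul_comm, mul_assoc, mul_left_comm]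

lemma pderiv_two_trinomial (d k : ℕ) :
    pderiv 2 (trinomial d k : MvPolynomial (Fin 3) R) = X 1 ^ (d - 1) := by
  simp [trinomial]

theorem stmt_4 (d k : ℕ) (hk : 1 ≤ k) (hkd : 2 * k + 1 < d)
    (f : MvPolynomial (Fin 3) ℂ)
    (hf : f = X 0 ^ d + X 0 ^ (d - k) * X 1 ^ k + X 1 ^ (d - 1) * X 2) :
    -(C (k : ℂ) * X 1 ^ (d - k - 1)) * pderiv 0 f
      + C (d : ℂ) * X 0 ^ (k - 1) * X 1 ^ (d - 2 * k) * pderiv 1 f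
      + (C ((k : ℂ) * ((d : ℂ) - k)) * X 0 ^ (d - k - 1)
          - C ((d : ℂ) * ((d : ℂ) - 1)) * X 0 ^ (k - 1) * X 1 ^ (d - 2 * k - 1) * X 2)
        * pderiv 2 f = 0 := by
  obtain rfl : f = trinomial d k := hf
  rw [pderiv_zero_trinomial, pderiv_one_trinomial, pderiv_two_trinomial]
  -- with `k = a + 1` and `d = 2a + c + 3` every exponent becomes subtraction-free
  obtain ⟨a, rfl⟩ : ∃ a, k = a + 1 := ⟨k - 1, by omega⟩
  obtain ⟨c, rfl⟩ : ∃ c, d = 2 * a + c + 3 := ⟨d - 2 * a - 3, by omega⟩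
  rw [show 2 * a + c + 3 - (a + 1) - 1 = a + c + 1 by omega,
    show 2 * a + c + 3 - (a + 1) = a + c + 2 by omega,
    show 2 * a + c + 3 - 1 = 2 * a + c + 2 by omega,
    show 2 * a + c + 3 - 2 = 2 * a + c + 1 by omega,
    show 2 * a + c + 3 - 2 * (a + 1) - 1 = c by omega,
    show 2 * a + c + 3 - 2 * (a + 1) = c + 1 by omega]
  simp only [nsmul_eq_mul, map_mul, map_sub, map_one, map_natCast, add_tsub_cancel_right]
  push_cast
  ring
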